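/- arXiv:2002.08276 — 2 statements merged into one kernel-verified Lean document; each statement's English description precedes it below -/
import Mathlib

section
/- Suppose A > max_{ij} C_{ij}, C has nonnegative entries, and T̄* minimizes ⟨C̄, T̄⟩ over the extended polytope Π(p̄, q̄), where C̄ extends C with entries ξ on the last row and column and 2ξ + A at position (n+1, m+1). Then T̄*_{(n+1)(m+1)} = 0. -/
theorem stmt_3 (n m : ℕ) (p : Fin n → ℝ) (q : Fin m → ℝ) (s ξ A : ℝ)
    (C : Fin n → Fin m → ℝ)
    (hC : ∀ i j, 0 ≤ C i j) (hA : ∀ i j, C i j < A)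
    (hp : ∀ i, 0 ≤ p i) (hq : ∀ j, 0 ≤ q j)
    (hs0 : 0 ≤ s) (hs1 : s ≤ min (∑ i, p i) (∑ j, q j))
    (Cbar : Fin (n + 1) → Fin (m + 1) → ℝ)
    (hCbar : Cbar = Fin.snoc (fun i => Fin.snoc (C i) ξ)
      (Fin.snoc (fun _ => ξ) (2 * ξ + A)))
    (Pol : Set (Fin (n + 1) → Fin (m + 1) → ℝ))
    (hPol : Pol = {T | (∀ i j, 0 ≤ T i j)
      ∧ (∀ i : Fin (n + 1), ∑ j, T i j = (Fin.snoc p ((∑ j, q j) - s) : Fin (n + 1) → ℝ) i)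
      ∧ (∀ j : Fin (m + 1), ∑ i, T i j = (Fin.snoc q ((∑ i, p i) - s) : Fin (m + 1) → ℝ) j)})
    (Γ : Fin (n + 1) → Fin (m + 1) → ℝ)
    (hΓ : Γ ∈ Pol) (hΓ0 : Γ (Fin.last n) (Fin.last m) = 0)
    (Tbar : Fin (n + 1) → Fin (m + 1) → ℝ)
    (hTbar : Tbar ∈ Pol)
    (hmin : ∀ T' ∈ Pol, ∑ i, ∑ j, Cbar i j * Tbar i j ≤ ∑ i, ∑ j, Cbar i j * T' i j) :
    Tbar (Fin.last n) (Fin.last m) = 0 := by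
  subst hPol
  obtain ⟨hT0, hTrow, hTcol⟩ := hTbar
  by_contra ht0
  have ht : 0 < Tbar (Fin.last n) (Fin.last m) :=
    lt_of_le_of_ne (hT0 _ _) (Ne.symm ht0)
  -- find an inner positive cell
  have hex : ∃ i0 : Fin n, ∃ j0 : Fin m, 0 < Tbar i0.castSucc j0.castSucc := by
    by_contra hno
    push_neg at hno
    have hzero : ∀ (i : Fin n) (j : Fin m), Tbar i.castSucc j.castSucc = 0 :=
      fun i j => le_antisymm (hno i j) (hT0 _ _)
    have hrow : ∀ i : Fin n, Tbar i.castSucc (Fin.last m) = p i := by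
      intro i
      have h := hTrow i.castSucc
      rw [Fin.sum_univ_castSucc] at h
      simpa [hzero i, Fin.snoc_castSucc] using h
    have hcol := hTcol (Fin.last m)
    rw [Fin.sum_univ_castSucc] at hcol
    simp only [Fin.snoc_last] at hcol
    rw [Finset.sum_congr rfl (fun i _ => hrow i)] at hcol
    linarith
  obtain ⟨i0, j0, hpos⟩ := hex
  set ε := min (Tbar (Fin.last n) (Fin.last m)) (Tbar i0.castSucc j0.castSucc) with hε
  have hεpos : 0 < ε := lt_min ht hpos
  have hε1 : ε ≤ Tbar (Fin.last n) (Fin.last m) := min_le_left _ _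
  have hε2 : ε ≤ Tbar i0.castSucc j0.castSucc := min_le_right _ _
  set e : Fin (n+1) → Fin (m+1) → ℝ := fun i j =>
    ((if i = i0.castSucc then (1:ℝ) else 0) - (if i = Fin.last n then 1 else 0)) *
    ((if j = Fin.last m then (1:ℝ) else 0) - (if j = j0.castSucc then 1 else 0)) with he
  have hine : (i0.castSucc : Fin (n+1)) ≠ Fin.last n := (Fin.castSucc_lt_last i0).ne
  have hjne : (j0.castSucc : Fin (m+1)) ≠ Fin.last m := (Fin.castSucc_lt_last j0).ne
  -- row/col sums of e vanish
  have herow : ∀ i, ∑ j, e i j = 0 := by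
    intro i
    simp only [he]
    rw [← Finset.mul_sum, Finset.sum_sub_distrib]
    simp [Finset.sum_ite_eq']
  have hecol : ∀ j, ∑ i, e i j = 0 := by
    intro j
    simp only [he]
    rw [← Finset.sum_mul, Finset.sum_sub_distrib]
    simp [Finset.sum_ite_eq']
  -- key double sum identity
  have key : ∀ M : Fin (n+1) → Fin (m+1) → ℝ,
      ∑ i, ∑ j, M i j * e i j =
        M i0.castSucc (Fin.last m) - M i0.castSucc j0.castSucc
        - M (Fin.last n) (Fin.last m) + M (Fin.last n) j0.castSucc := by
    intro M
    have h1 : ∀ i : Fin (n+1), ∑ j, M i j * e i j =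
        ((if i = i0.castSucc then (1:ℝ) else 0) - (if i = Fin.last n then 1 else 0)) *
        (M i (Fin.last m) - M i j0.castSucc) := by
      intro i
      have hj : ∀ j : Fin (m+1), M i j * e i j =
          ((if i = i0.castSucc then (1:ℝ) else 0) - (if i = Fin.last n then 1 else 0)) *
          ((if j = Fin.last m then M i j else 0) - (if j = j0.castSucc then M i j else 0)) := by
        intro j
        simp only [he]
        by_cases h1 : j = Fin.last m <;> by_cases h2 : j = j0.castSucc <;>
          simp [h1, h2, hine, hjne, Ne.symm hine, Ne.symm hjne] <;> ring
      rw [Finset.sum_congr rfl (fun j _ => hj j), ← Finset.mul_sum,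
        Finset.sum_sub_distrib]
      simp [Finset.sum_ite_eq']
    rw [Finset.sum_congr rfl (fun i _ => h1 i)]
    have hi : ∀ i : Fin (n+1),
        ((if i = i0.castSucc then (1:ℝ) else 0) - (if i = Fin.last n then 1 else 0)) *
        (M i (Fin.last m) - M i j0.castSucc) =
        (if i = i0.castSucc then M i (Fin.last m) - M i j0.castSucc else 0)
        - (if i = Fin.last n then M i (Fin.last m) - M i j0.castSucc else 0) := by
      intro i
      by_cases h1 : i = i0.castSucc <;> by_cases h2 : i = Fin.last n <;>
        simp [h1, h2, hine, hjne, Ne.symm hine, Ne.symm hjne] <;> ring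
    rw [Finset.sum_congr rfl (fun i _ => hi i), Finset.sum_sub_distrib]
    simp [Finset.sum_ite_eq', hine, hjne, Ne.symm hine, Ne.symm hjne]
    ring
  subst hCbar
  set T' : Fin (n+1) → Fin (m+1) → ℝ := fun i j => Tbar i j + ε * e i j with hT'
  have hT'mem : T' ∈ {T : Fin (n + 1) → Fin (m + 1) → ℝ | (∀ i j, 0 ≤ T i j)
      ∧ (∀ i : Fin (n + 1), ∑ j, T i j = (Fin.snoc p ((∑ j, q j) - s) : Fin (n + 1) → ℝ) i)
      ∧ (∀ j : Fin (m + 1), ∑ i, T i j = (Fin.snoc q ((∑ i, p i) - s) : Fin (m + 1) → ℝ) j)} := by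
    refine ⟨fun i j => ?_, fun i => ?_, fun j => ?_⟩
    · simp only [hT', he]
      by_cases h1 : i = i0.castSucc <;> by_cases h2 : i = Fin.last n <;>
        by_cases h3 : j = Fin.last m <;> by_cases h4 : j = j0.castSucc <;>
        simp [h1, h2, h3, h4, hine, hjne, Ne.symm hine, Ne.symm hjne] <;>
        linarith [hT0 i j, hT0 i0.castSucc j0.castSucc,
          hT0 (Fin.last n) (Fin.last m), hT0 i0.castSucc (Fin.last m),
          hT0 (Fin.last n) j0.castSucc, hT0 i0.castSucc j, hT0 (Fin.last n) j,
          hT0 i (Fin.last m), hT0 i j0.castSucc, hεpos, hε1, hε2]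
    · simp only [hT']
      rw [Finset.sum_add_distrib, ← Finset.mul_sum, herow i, mul_zero, add_zero]
      exact hTrow i
    · simp only [hT']
      rw [Finset.sum_add_distrib, ← Finset.mul_sum, hecol j, mul_zero, add_zero]
      exact hTcol j
  have hle := hmin T' hT'mem
  have hcost : ∑ i, ∑ j,
      (Fin.snoc (fun i => Fin.snoc (C i) ξ) (Fin.snoc (fun _ => ξ) (2 * ξ + A)) :
        Fin (n+1) → Fin (m+1) → ℝ) i j * T' i j
      = ∑ i, ∑ j,
      (Fin.snoc (fun i => Fin.snoc (C i) ξ) (Fin.snoc (fun _ => ξ) (2 * ξ + A)) :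
        Fin (n+1) → Fin (m+1) → ℝ) i j * Tbar i j + ε * (-(C i0 j0 + A)) := by
    have hsplit : ∀ (i : Fin (n+1)) (j : Fin (m+1)),
        (Fin.snoc (fun i => Fin.snoc (C i) ξ) (Fin.snoc (fun _ => ξ) (2 * ξ + A)) :
          Fin (n+1) → Fin (m+1) → ℝ) i j * T' i j
        = (Fin.snoc (fun i => Fin.snoc (C i) ξ) (Fin.snoc (fun _ => ξ) (2 * ξ + A)) :
          Fin (n+1) → Fin (m+1) → ℝ) i j * Tbar i j
        + ε * ((Fin.snoc (fun i => Fin.snoc (C i) ξ) (Fin.snoc (fun _ => ξ) (2 * ξ + A)) :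
          Fin (n+1) → Fin (m+1) → ℝ) i j * e i j) := by
      intro i j; simp only [hT']; ring
    calc ∑ i, ∑ j, _ * T' i j
        = ∑ i, ∑ j, (_ * Tbar i j + ε * (_ * e i j)) :=
          Finset.sum_congr rfl fun i _ => Finset.sum_congr rfl fun j _ => hsplit i j
      _ = ∑ i, ∑ j, _ * Tbar i j + ε * ∑ i, ∑ j, _ * e i j := by
          rw [Finset.sum_congr rfl fun i _ => Finset.sum_add_distrib, Finset.sum_add_distrib,
            Finset.mul_sum]
          congr 1
          exact Finset.sum_congr rfl fun i _ => (Finset.mul_sum _ _ _).symm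
      _ = _ := by
          rw [key]
          simp only [Fin.snoc_castSucc, Fin.snoc_last]
          ring
  rw [hcost] at hle
  nlinarith [hA i0 j0, hC i0 j0, hεpos]
end

section
/- Under the assumptions A > max_{ij} C_{ij} and ξ bounded, the minimum of ⟨C̄, T̄⟩ over the extended polytope Π(p̄, q̄) equals the minimum of ⟨C, T⟩ over the partial transport polytope Πᵘ(p, q) plus ξ(‖p‖₁ + ‖q‖₁ − 2s). Moreover the restriction of an optimal T̄* to its first n rows and m columns is an optimal plan for the partial problem. -/
lemma cost_split (n m : ℕ) (C : Fin n → Fin m → ℝ) (ξ A : ℝ)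
    (S : Fin (n+1) → Fin (m+1) → ℝ) :
    ∑ i, ∑ j, (Fin.snoc (fun i => Fin.snoc (C i) ξ)
      (Fin.snoc (fun _ => ξ) (2 * ξ + A)) : Fin (n+1) → Fin (m+1) → ℝ) i j * S i j
      = (∑ i : Fin n, ∑ j : Fin m, C i j * S i.castSucc j.castSucc)
        + ξ * (∑ i : Fin n, S i.castSucc (Fin.last m))
        + ξ * (∑ j : Fin m, S (Fin.last n) j.castSucc)
        + (2 * ξ + A) * S (Fin.last n) (Fin.last m) := by
  rw [Fin.sum_univ_castSucc]
  simp only [Fin.snoc_castSucc, Fin.snoc_last, Fin.sum_univ_castSucc,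
    Finset.sum_add_distrib, Finset.mul_sum]
  ring

lemma marg_facts (n m : ℕ) (p : Fin n → ℝ) (q : Fin m → ℝ) (s : ℝ)
    (S : Fin (n+1) → Fin (m+1) → ℝ)
    (hrow : ∀ i : Fin (n + 1), ∑ j, S i j = (Fin.snoc p ((∑ j, q j) - s) : Fin (n + 1) → ℝ) i)
    (hcol : ∀ j : Fin (m + 1), ∑ i, S i j = (Fin.snoc q ((∑ i, p i) - s) : Fin (m + 1) → ℝ) j) :
    (∀ i : Fin n, ∑ j : Fin m, S i.castSucc j.castSucc = p i - S i.castSucc (Fin.last m))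
    ∧ (∀ j : Fin m, ∑ i : Fin n, S i.castSucc j.castSucc = q j - S (Fin.last n) j.castSucc)
    ∧ (∑ j : Fin m, S (Fin.last n) j.castSucc = (∑ j, q j) - s - S (Fin.last n) (Fin.last m))
    ∧ (∑ i : Fin n, S i.castSucc (Fin.last m) = (∑ i, p i) - s - S (Fin.last n) (Fin.last m))
    ∧ (∑ i : Fin n, ∑ j : Fin m, S i.castSucc j.castSucc = s + S (Fin.last n) (Fin.last m)) := by
  have h1 : ∀ i : Fin n, ∑ j : Fin m, S i.castSucc j.castSucc = p i - S i.castSucc (Fin.last m) := by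
    intro i
    have := hrow i.castSucc
    rw [Fin.sum_univ_castSucc, Fin.snoc_castSucc] at this
    linarith
  have h2 : ∀ j : Fin m, ∑ i : Fin n, S i.castSucc j.castSucc = q j - S (Fin.last n) j.castSucc := by
    intro j
    have := hcol j.castSucc
    rw [Fin.sum_univ_castSucc, Fin.snoc_castSucc] at this
    linarith
  have h3 : ∑ j : Fin m, S (Fin.last n) j.castSucc = (∑ j, q j) - s - S (Fin.last n) (Fin.last m) := by
    have := hrow (Fin.last n)
    rw [Fin.sum_univ_castSucc, Fin.snoc_last] at this
    linarith
  have h4 : ∑ i : Fin n, S i.castSucc (Fin.last m) = (∑ i, p i) - s - S (Fin.last n) (Fin.last m) := by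
    have := hcol (Fin.last m)
    rw [Fin.sum_univ_castSucc, Fin.snoc_last] at this
    linarith
  refine ⟨h1, h2, h3, h4, ?_⟩
  have : ∑ i : Fin n, ∑ j : Fin m, S i.castSucc j.castSucc
      = ∑ i : Fin n, (p i - S i.castSucc (Fin.last m)) := Finset.sum_congr rfl fun i _ => h1 i
  rw [this, Finset.sum_sub_distrib, h4]
  ring

theorem stmt_4 (n m : ℕ) (p : Fin n → ℝ) (q : Fin m → ℝ) (s ξ A : ℝ)
    (C : Fin n → Fin m → ℝ)
    (hC : ∀ i j, 0 ≤ C i j) (hA : ∀ i j, C i j < A)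
    (hp : ∀ i, 0 ≤ p i) (hq : ∀ j, 0 ≤ q j)
    (hs0 : 0 ≤ s) (hs1 : s ≤ min (∑ i, p i) (∑ j, q j))
    (Cbar : Fin (n + 1) → Fin (m + 1) → ℝ)
    (hCbar : Cbar = Fin.snoc (fun i => Fin.snoc (C i) ξ)
      (Fin.snoc (fun _ => ξ) (2 * ξ + A)))
    (Pole : Set (Fin (n + 1) → Fin (m + 1) → ℝ))
    (hPole : Pole = {T | (∀ i j, 0 ≤ T i j)
      ∧ (∀ i : Fin (n + 1), ∑ j, T i j = (Fin.snoc p ((∑ j, q j) - s) : Fin (n + 1) → ℝ) i)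
      ∧ (∀ j : Fin (m + 1), ∑ i, T i j = (Fin.snoc q ((∑ i, p i) - s) : Fin (m + 1) → ℝ) j)})
    (Polu : Set (Fin n → Fin m → ℝ))
    (hPolu : Polu = {T | (∀ i j, 0 ≤ T i j)
      ∧ (∀ i, ∑ j, T i j ≤ p i) ∧ (∀ j, ∑ i, T i j ≤ q j)
      ∧ ∑ i, ∑ j, T i j = s})
    (Tbar : Fin (n + 1) → Fin (m + 1) → ℝ)
    (hTbar : Tbar ∈ Pole)
    (hmin : ∀ T' ∈ Pole, ∑ i, ∑ j, Cbar i j * Tbar i j ≤ ∑ i, ∑ j, Cbar i j * T' i j) :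
    (fun (i : Fin n) (j : Fin m) => Tbar i.castSucc j.castSucc) ∈ Polu
    ∧ (∀ T ∈ Polu,
        ∑ i : Fin n, ∑ j : Fin m, C i j * Tbar i.castSucc j.castSucc
          ≤ ∑ i : Fin n, ∑ j : Fin m, C i j * T i j)
    ∧ ∑ i, ∑ j, Cbar i j * Tbar i j
        = (∑ i : Fin n, ∑ j : Fin m, C i j * Tbar i.castSucc j.castSucc)
          + ξ * ((∑ i, p i) + (∑ j, q j) - 2 * s) := by
  rw [hPole] at hTbar hmin
  obtain ⟨hT0, hTrow, hTcol⟩ := hTbar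
  obtain ⟨h1, h2, h3, h4, h5⟩ := marg_facts n m p q s Tbar hTrow hTcol
  -- Step 1: the corner is zero
  have hc0 : Tbar (Fin.last n) (Fin.last m) = 0 := by
    by_contra hc
    have hcpos : 0 < Tbar (Fin.last n) (Fin.last m) :=
      lt_of_le_of_ne (hT0 _ _) (Ne.symm hc)
    obtain ⟨i₀, j₀, hij⟩ : ∃ (i : Fin n) (j : Fin m), 0 < Tbar i.castSucc j.castSucc := by
      by_contra h
      push_neg at h
      have : ∑ i : Fin n, ∑ j : Fin m, Tbar i.castSucc j.castSucc ≤ 0 :=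
        Finset.sum_nonpos fun i _ => Finset.sum_nonpos fun j _ => h i j
      rw [h5] at this
      linarith
    set δ := min (Tbar (Fin.last n) (Fin.last m)) (Tbar i₀.castSucc j₀.castSucc) with hδ
    have hδpos : 0 < δ := lt_min hcpos hij
    have hδc : δ ≤ Tbar (Fin.last n) (Fin.last m) := min_le_left _ _
    have hδT : δ ≤ Tbar i₀.castSucc j₀.castSucc := min_le_right _ _
    have hane : i₀.castSucc ≠ Fin.last n := (Fin.castSucc_lt_last i₀).ne
    have hbne : j₀.castSucc ≠ Fin.last m := (Fin.castSucc_lt_last j₀).ne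
    set a : Fin (n+1) → ℝ := fun i =>
      (if i = i₀.castSucc then (1:ℝ) else 0) - (if i = Fin.last n then 1 else 0) with ha
    set b : Fin (m+1) → ℝ := fun j =>
      (if j = Fin.last m then (1:ℝ) else 0) - (if j = j₀.castSucc then 1 else 0) with hb
    have ha1 : a i₀.castSucc = 1 := by simp [ha, hane]
    have ha2 : a (Fin.last n) = -1 := by simp [ha, Ne.symm hane]
    have ha3 : ∀ i, i ≠ i₀.castSucc → i ≠ Fin.last n → a i = 0 := by
      intro i hi hi'; simp [ha, hi, hi']
    have hb1 : b (Fin.last m) = 1 := by simp [hb, Ne.symm hbne]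
    have hb2 : b j₀.castSucc = -1 := by simp [hb, hbne]
    have hb3 : ∀ j, j ≠ j₀.castSucc → j ≠ Fin.last m → b j = 0 := by
      intro j hj hj'; simp [hb, hj, hj']
    set T' : Fin (n+1) → Fin (m+1) → ℝ := fun i j => Tbar i j + δ * a i * b j with hT'
    have hsa : ∑ i, a i = 0 := by
      simp [ha, Finset.sum_sub_distrib]
    have hsb : ∑ j, b j = 0 := by
      simp [hb, Finset.sum_sub_distrib]
    have hmem : T' ∈ {T : Fin (n+1) → Fin (m+1) → ℝ | (∀ i j, 0 ≤ T i j)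
      ∧ (∀ i : Fin (n + 1), ∑ j, T i j = (Fin.snoc p ((∑ j, q j) - s) : Fin (n + 1) → ℝ) i)
      ∧ (∀ j : Fin (m + 1), ∑ i, T i j = (Fin.snoc q ((∑ i, p i) - s) : Fin (m + 1) → ℝ) j)} := by
      refine ⟨?_, ?_, ?_⟩
      · intro i j
        have hTn := hT0 i j
        show 0 ≤ Tbar i j + δ * a i * b j
        rcases eq_or_ne i i₀.castSucc with hi | hi
        · subst hi
          rw [ha1]
          rcases eq_or_ne j j₀.castSucc with hj | hj
          · subst hj; rw [hb2]; linarith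
          · rcases eq_or_ne j (Fin.last m) with hj' | hj'
            · subst hj'; rw [hb1]; nlinarith
            · rw [hb3 j hj hj']; linarith
        · rcases eq_or_ne i (Fin.last n) with hi' | hi'
          · subst hi'
            rw [ha2]
            rcases eq_or_ne j j₀.castSucc with hj | hj
            · subst hj; rw [hb2]; nlinarith
            · rcases eq_or_ne j (Fin.last m) with hj' | hj'
              · subst hj'; rw [hb1]; linarith
              · rw [hb3 j hj hj']; linarith
          · rw [ha3 i hi hi']; simpa using hTn
      · intro i
        have : ∑ j, T' i j = ∑ j, Tbar i j + δ * a i * ∑ j, b j := by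
          rw [Finset.mul_sum, ← Finset.sum_add_distrib]
        rw [this, hsb, mul_zero, add_zero, hTrow i]
      · intro j
        have : ∑ i, T' i j = ∑ i, Tbar i j + (∑ i, a i) * (δ * b j) := by
          rw [Finset.sum_mul, ← Finset.sum_add_distrib]
          congr 1; ext i; ring
        rw [this, hsa, zero_mul, add_zero, hTcol j]
    have hle := hmin T' hmem
    have hcost' : ∑ i, ∑ j, Cbar i j * T' i j
        = ∑ i, ∑ j, Cbar i j * Tbar i j + δ * (-(C i₀ j₀) - A) := by
      have e1 : ∀ i, ∑ j, Cbar i j * T' i j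
          = ∑ j, Cbar i j * Tbar i j + δ * a i * (∑ j, Cbar i j * b j) := by
        intro i
        rw [Finset.mul_sum, ← Finset.sum_add_distrib]
        congr 1; ext j
        show Cbar i j * (Tbar i j + δ * a i * b j) = _
        ring
      simp only [e1, Finset.sum_add_distrib]
      congr 1
      have e2 : ∀ i, ∑ j, Cbar i j * b j = Cbar i (Fin.last m) - Cbar i j₀.castSucc := by
        intro i
        simp [hb, mul_sub, Finset.sum_sub_distrib, mul_ite, mul_one, mul_zero]
      simp only [e2]
      have e3 : ∀ i : Fin (n+1), δ * a i * (Cbar i (Fin.last m) - Cbar i j₀.castSucc)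
          = δ * ((if i = i₀.castSucc then (1:ℝ) else 0) * (Cbar i (Fin.last m) - Cbar i j₀.castSucc))
            - δ * ((if i = Fin.last n then (1:ℝ) else 0) * (Cbar i (Fin.last m) - Cbar i j₀.castSucc)) := by
        intro i; simp only [ha]; ring
      simp only [e3, Finset.sum_sub_distrib, ← Finset.mul_sum, ite_mul, one_mul, zero_mul,
        Finset.sum_ite_eq', Finset.mem_univ, if_true]
      rw [hCbar]
      simp only [Fin.snoc_castSucc, Fin.snoc_last]
      ring
    rw [hcost'] at hle
    have hpos : 0 < C i₀ j₀ + A := by have := hC i₀ j₀; have := hA i₀ j₀; linarith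
    nlinarith
  -- Part 1: restriction is in Polu
  have part1 : (fun (i : Fin n) (j : Fin m) => Tbar i.castSucc j.castSucc) ∈ Polu := by
    rw [hPolu]
    refine ⟨fun i j => hT0 _ _, ?_, ?_, ?_⟩
    · intro i
      have := hT0 i.castSucc (Fin.last m)
      rw [h1 i]; linarith
    · intro j
      have := hT0 (Fin.last n) j.castSucc
      rw [h2 j]; linarith
    · rw [h5, hc0]; ring
  refine ⟨part1, ?_, ?_⟩
  · -- Part 2: optimality of the restriction
    intro T hT
    rw [hPolu] at hT
    obtain ⟨hT0', hrow', hcol', hsum'⟩ := hT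
    set Text : Fin (n+1) → Fin (m+1) → ℝ :=
      Fin.snoc (fun i => Fin.snoc (T i) (p i - ∑ j, T i j))
        (Fin.snoc (fun j => q j - ∑ i, T i j) 0) with hText
    have hTr : ∀ (i : Fin n) (j : Fin m), Text i.castSucc j.castSucc = T i j := by
      intro i j; simp [hText, Fin.snoc_castSucc]
    have hTrl : ∀ i : Fin n, Text i.castSucc (Fin.last m) = p i - ∑ j, T i j := by
      intro i; simp [hText]
    have hTlc : ∀ j : Fin m, Text (Fin.last n) j.castSucc = q j - ∑ i, T i j := by
      intro j; simp [hText]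
    have hTll : Text (Fin.last n) (Fin.last m) = 0 := by simp [hText]
    have hswap : ∑ j : Fin m, ∑ i : Fin n, T i j = s := by
      rw [Finset.sum_comm]; exact hsum'
    have hmemT : Text ∈ {T : Fin (n+1) → Fin (m+1) → ℝ | (∀ i j, 0 ≤ T i j)
      ∧ (∀ i : Fin (n + 1), ∑ j, T i j = (Fin.snoc p ((∑ j, q j) - s) : Fin (n + 1) → ℝ) i)
      ∧ (∀ j : Fin (m + 1), ∑ i, T i j = (Fin.snoc q ((∑ i, p i) - s) : Fin (m + 1) → ℝ) j)} := by
      refine ⟨?_, ?_, ?_⟩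
      · intro i j
        induction i using Fin.lastCases with
        | last =>
          induction j using Fin.lastCases with
          | last => rw [hTll]
          | cast j => rw [hTlc j]; have := hcol' j; linarith
        | cast i =>
          induction j using Fin.lastCases with
          | last => rw [hTrl i]; have := hrow' i; linarith
          | cast j => rw [hTr i j]; exact hT0' i j
      · intro i
        induction i using Fin.lastCases with
        | last =>
          rw [Fin.sum_univ_castSucc, Fin.snoc_last, hTll, add_zero]
          have : ∑ j : Fin m, Text (Fin.last n) j.castSucc
              = ∑ j : Fin m, (q j - ∑ i, T i j) := Finset.sum_congr rfl fun j _ => hTlc j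
          rw [this, Finset.sum_sub_distrib, hswap]
        | cast i =>
          rw [Fin.sum_univ_castSucc, Fin.snoc_castSucc, hTrl i]
          have : ∑ j : Fin m, Text i.castSucc j.castSucc = ∑ j, T i j :=
            Finset.sum_congr rfl fun j _ => hTr i j
          rw [this]; ring
      · intro j
        induction j using Fin.lastCases with
        | last =>
          rw [Fin.sum_univ_castSucc, Fin.snoc_last, hTll, add_zero]
          have : ∑ i : Fin n, Text i.castSucc (Fin.last m)
              = ∑ i : Fin n, (p i - ∑ j, T i j) := Finset.sum_congr rfl fun i _ => hTrl i
          rw [this, Finset.sum_sub_distrib, hsum']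
        | cast j =>
          rw [Fin.sum_univ_castSucc, Fin.snoc_castSucc, hTlc j]
          have : ∑ i : Fin n, Text i.castSucc j.castSucc = ∑ i, T i j :=
            Finset.sum_congr rfl fun i _ => hTr i j
          rw [this]; ring
    have hle := hmin Text hmemT
    rw [hCbar, cost_split, cost_split] at hle
    have er : ∑ i : Fin n, ∑ j : Fin m, C i j * Text i.castSucc j.castSucc
        = ∑ i : Fin n, ∑ j : Fin m, C i j * T i j := by
      refine Finset.sum_congr rfl fun i _ => Finset.sum_congr rfl fun j _ => ?_
      rw [hTr i j]
    have e5 : ∑ i : Fin n, Text i.castSucc (Fin.last m) = (∑ i, p i) - s := by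
      have : ∑ i : Fin n, Text i.castSucc (Fin.last m)
          = ∑ i : Fin n, (p i - ∑ j, T i j) := Finset.sum_congr rfl fun i _ => hTrl i
      rw [this, Finset.sum_sub_distrib, hsum']
    have e6 : ∑ j : Fin m, Text (Fin.last n) j.castSucc = (∑ j, q j) - s := by
      have : ∑ j : Fin m, Text (Fin.last n) j.castSucc
          = ∑ j : Fin m, (q j - ∑ i, T i j) := Finset.sum_congr rfl fun j _ => hTlc j
      rw [this, Finset.sum_sub_distrib, hswap]
    rw [er, e5, e6, hTll, h3, h4, hc0, mul_zero] at hle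
    linarith
  · -- Part 3: cost decomposition
    rw [hCbar, cost_split, h3, h4, hc0]
    ring
end
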